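/- Quantum central limit theorem for qubit convolution: for an n-qubit state ρ and K = 2N+1, the repeated self-convolution satisfies ||⊠_K ρ − M(ρ^#)||_2 ≤ (1 − MG(ρ))^{K-1} ||ρ − M(ρ)||_2, where ρ^# = ρ for even N and ρ^# = ρ^T for odd N. -/

import Mathlib

open Matrix Finset
open scoped ComplexOrder

variable {G : Type*} [AddCommGroup G] [Fintype G] [DecidableEq G]

/-- The key unitary of the `(m+1)`-fold qubit convolution, as a permutation of
computational basis labels: `(x₁,…,x_K) ↦ (Σᵢ xᵢ, x₂+x₁, …, x_K+x₁)`. -/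
def keyFun (m : ℕ) (t : Fin (m + 1) → G) : Fin (m + 1) → G :=
  fun i => if i = 0 then ∑ j, t j else t i + t 0

/-- The key unitary `V` (a permutation matrix built from CNOT gates). -/
def keyU (m : ℕ) : Matrix (Fin (m + 1) → G) (Fin (m + 1) → G) ℂ :=
  Matrix.of fun x y => if x = keyFun m y then 1 else 0

/-- The tensor product `ρ₁ ⊗ ⋯ ⊗ ρ_K` of `K = m+1` states. -/
def bigTensor (m : ℕ) (ρ : Fin (m + 1) → Matrix G G ℂ) :
    Matrix (Fin (m + 1) → G) (Fin (m + 1) → G) ℂ :=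
  Matrix.of fun x y => ∏ i, ρ i (x i) (y i)

/-- Partial trace over subsystems `2, …, K`, keeping the first subsystem. -/
noncomputable def ptraceFirst (m : ℕ)
    (M : Matrix (Fin (m + 1) → G) (Fin (m + 1) → G) ℂ) : Matrix G G ℂ :=
  Matrix.of fun a b =>
    ∑ r : {i : Fin (m + 1) // i ≠ 0} → G,
      M (fun i => if h : i = 0 then a else r ⟨i, h⟩)
        (fun i => if h : i = 0 then b else r ⟨i, h⟩)

/-- The `K = m+1`-fold quantum convolution
`⊠_K(ρ₁ ⊗ ⋯ ⊗ ρ_K) = Tr_{2,…,K}(V (ρ₁⊗⋯⊗ρ_K) V†)`. -/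
noncomputable def qconv (m : ℕ) (ρ : Fin (m + 1) → Matrix G G ℂ) : Matrix G G ℂ :=
  ptraceFirst m (keyU m * bigTensor m ρ * (keyU m)ᴴ)

/-- A quantum state: positive semidefinite with unit trace. -/
def IsState (ρ : Matrix G G ℂ) : Prop := ρ.PosSemidef ∧ ρ.trace = 1

/-- Qubit shift operator. -/
def pauliX : Matrix (ZMod 2) (ZMod 2) ℂ :=
  Matrix.of fun k l => if k = l + 1 then 1 else 0

/-- Qubit phase operator. -/
def pauliZ : Matrix (ZMod 2) (ZMod 2) ℂ :=
  Matrix.of fun k l => if k = l then (-1 : ℂ) ^ (k.val) else 0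

/-- Qubit Pauli operator `w(p,q) = i^{-pq} Z^p X^q`. -/
noncomputable def pauliW (p q : ZMod 2) : Matrix (ZMod 2) (ZMod 2) ℂ :=
  Complex.I ^ (-(p.val * q.val : ℤ)) • (pauliZ ^ p.val * pauliX ^ q.val)

/-- `n`-qubit Pauli operator `w(p⃗,q⃗)`. -/
noncomputable def pauliWn (n : ℕ)
    (pq : (Fin n → ZMod 2) × (Fin n → ZMod 2)) :
    Matrix (Fin n → ZMod 2) (Fin n → ZMod 2) ℂ :=
  Matrix.of fun a b => ∏ k, pauliW (pq.1 k) (pq.2 k) (a k) (b k)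

/-- Characteristic function `Ξ_ρ(p⃗,q⃗) = Tr(ρ w(-p⃗,-q⃗))` of an `n`-qubit
operator. -/
noncomputable def charFn {n : ℕ}
    (ρ : Matrix (Fin n → ZMod 2) (Fin n → ZMod 2) ℂ)
    (pq : (Fin n → ZMod 2) × (Fin n → ZMod 2)) : ℂ :=
  (ρ * pauliWn n (-pq.1, -pq.2)).trace

open scoped Classical

/-- The mean state `M(ρ)`: its characteristic function agrees with `Ξ_ρ` where
`|Ξ_ρ| = 1` and vanishes elsewhere. -/
noncomputable def meanState {n : ℕ}
    (ρ : Matrix (Fin n → ZMod 2) (Fin n → ZMod 2) ℂ) :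
    Matrix (Fin n → ZMod 2) (Fin n → ZMod 2) ℂ :=
  ((2 : ℂ) ^ n)⁻¹ • ∑ pq,
    (if ‖charFn ρ pq‖ = 1 then charFn ρ pq else 0) • pauliWn n pq

/-- The magic gap
`MG(ρ) = 1 - max {|Ξ_ρ(p⃗,q⃗)| : (p⃗,q⃗) ∈ supp Ξ_ρ, |Ξ_ρ(p⃗,q⃗)| ≠ 1}`,
set to `0` if the set is empty. -/
noncomputable def magicGap {n : ℕ}
    (ρ : Matrix (Fin n → ZMod 2) (Fin n → ZMod 2) ℂ) : ℝ :=
  if {r : ℝ | ∃ pq, charFn ρ pq ≠ 0 ∧ ‖charFn ρ pq‖ ≠ 1 ∧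
      r = ‖charFn ρ pq‖} = ∅ then 0
  else 1 - sSup {r : ℝ | ∃ pq, charFn ρ pq ≠ 0 ∧
      ‖charFn ρ pq‖ ≠ 1 ∧ r = ‖charFn ρ pq‖}

/-- Normalized Hilbert–Schmidt norm: `‖A‖₂² = 2^{-n} Σ |Ξ_A(p⃗,q⃗)|²`. -/
noncomputable def hsNorm2 {n : ℕ}
    (A : Matrix (Fin n → ZMod 2) (Fin n → ZMod 2) ℂ) : ℝ :=
  Real.sqrt (((2 : ℝ) ^ n)⁻¹ * ∑ pq, (‖charFn A pq‖) ^ 2)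

lemma zmod2_cases : ∀ x : ZMod 2, x = 0 ∨ x = 1 := by decide
lemma sum_zmod2 (f : ZMod 2 → ℂ) : ∑ x, f x = f 0 + f 1 := by
  have h : (univ : Finset (ZMod 2)) = {0, 1} := by decide
  rw [h, Finset.sum_insert (by decide), Finset.sum_singleton]
lemma zmod2_val_zero : (0 : ZMod 2).val = 0 := rfl
lemma zmod2_val_one : (1 : ZMod 2).val = 1 := rfl
lemma zmod2_val_two : (2 : ZMod 2).val = 0 := rfl

lemma pauliW_apply (p q a b : ZMod 2) :
    pauliW p q a b = Complex.I ^ (-(p.val * q.val : ℤ)) *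
      ((-1 : ℂ) ^ (p.val * a.val)) * (if a = b + q then 1 else 0) := by
  rcases zmod2_cases p with hp | hp <;> rcases zmod2_cases q with hq | hq <;>
    subst hp hq <;>
  rcases zmod2_cases a with ha | ha <;> rcases zmod2_cases b with hb | hb <;>
    subst ha hb <;>
  simp only [pauliW, pauliZ, pauliX, Matrix.smul_apply, Matrix.mul_apply, sum_zmod2,
    zmod2_val_zero, zmod2_val_one, pow_zero, pow_one, Matrix.one_apply, Matrix.of_apply,
    Nat.mul_zero, Nat.zero_mul, Nat.mul_one, Nat.one_mul, Nat.cast_zero, Nat.cast_one,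
    neg_zero, zpow_zero, _root_.zpow_neg, zpow_one, Complex.inv_I, smul_eq_mul] <;>
  norm_num


section CF
variable {n : ℕ}

/-- sign character -/
noncomputable def Esgn (p a : Fin n → ZMod 2) : ℂ := ∏ k, (-1 : ℂ) ^ ((p k).val * (a k).val)
/-- phase constant -/
noncomputable def cst (p q : Fin n → ZMod 2) : ℂ :=
  ∏ k, Complex.I ^ (-(((p k).val * (q k).val) : ℤ))

lemma sgn_add (x y z : ZMod 2) :
    ((-1 : ℂ)) ^ (x.val * (y + z).val) = (-1) ^ (x.val * y.val) * (-1) ^ (x.val * z.val) := by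
  rcases zmod2_cases x with h | h <;> rcases zmod2_cases y with h' | h' <;>
    rcases zmod2_cases z with h'' | h'' <;> subst h h' h'' <;> norm_num [zmod2_val_two, zmod2_val_one, zmod2_val_zero]

lemma Esgn_add (p a b : Fin n → ZMod 2) : Esgn p (a + b) = Esgn p a * Esgn p b := by
  rw [Esgn, Esgn, Esgn, ← Finset.prod_mul_distrib]
  exact Finset.prod_congr rfl fun k _ => sgn_add _ _ _

lemma Esgn_sq (p a : Fin n → ZMod 2) : Esgn p a * Esgn p a = 1 := by
  rw [Esgn, ← Finset.prod_mul_distrib]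
  rw [← Finset.prod_const_one (s := (univ : Finset (Fin n)))]
  exact Finset.prod_congr rfl fun k _ => by
    rw [← pow_add, ← two_mul, pow_mul]; norm_num

lemma Esgn_cases (p a : Fin n → ZMod 2) : Esgn p a = 1 ∨ Esgn p a = -1 := by
  rw [Esgn]; exact Finset.prod_induction _ (fun x => x = 1 ∨ x = -1)
    (by rintro x y (h|h) (h'|h') <;> simp [h, h']) (Or.inl rfl)
    (fun k _ => by rcases Nat.even_or_odd ((p k).val * (a k).val) with h | h
                   · exact Or.inl (h.neg_one_pow)
                   · exact Or.inr (h.neg_one_pow))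

lemma neg_zmod2 (x : ZMod 2) : -x = x := by revert x; decide

lemma add_self_zmod2 (x : Fin n → ZMod 2) : x + x = 0 := by
  funext k; have : ∀ y : ZMod 2, y + y = 0 := by decide
  exact this (x k)

lemma prod_ite_eq_pi (b c : Fin n → ZMod 2) :
    (∏ k, if b k = c k then (1:ℂ) else 0) = if b = c then 1 else 0 := by
  by_cases h : b = c
  · subst h; simp
  · rw [if_neg h]
    obtain ⟨k, hk⟩ : ∃ k, b k ≠ c k := by
      by_contra hc; push_neg at hc; exact h (funext hc)
    exact Finset.prod_eq_zero (Finset.mem_univ k) (if_neg hk)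

/-- key entry formula for the characteristic function -/
lemma charFn_eq (A : Matrix (Fin n → ZMod 2) (Fin n → ZMod 2) ℂ) (p q : Fin n → ZMod 2) :
    charFn A (p, q) = cst p q * Esgn p q * ∑ a, A a (a + q) * Esgn p a := by
  have hneg : (fun k => -(p k)) = p := funext fun k => neg_zmod2 _
  have hnegq : (fun k => -(q k)) = q := funext fun k => neg_zmod2 _
  rw [charFn, Matrix.trace]
  simp only [Matrix.diag_apply, Matrix.mul_apply]
  have key : ∀ a b : Fin n → ZMod 2, pauliWn n (-p, -q) b a =
      cst p q * Esgn p b * (if b = a + q then 1 else 0) := by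
    intro a b
    rw [pauliWn]
    show (∏ k, pauliW (-p k) (-q k) (b k) (a k)) = _
    have : ∀ k, pauliW (-p k) (-q k) (b k) (a k) =
        (Complex.I ^ (-(((p k).val * (q k).val) : ℤ)) * ((-1 : ℂ) ^ ((p k).val * (b k).val)))
          * (if b k = a k + q k then 1 else 0) := by
      intro k
      rw [pauliW_apply, neg_zmod2, neg_zmod2, mul_assoc]
    rw [Finset.prod_congr rfl fun k _ => this k, Finset.prod_mul_distrib,
      Finset.prod_mul_distrib, prod_ite_eq_pi]
    rfl
  calc (∑ a, ∑ b, A a b * pauliWn n (-p, -q) b a)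
      = ∑ a, ∑ b, A a b * (cst p q * Esgn p b * (if b = a + q then 1 else 0)) := by
        refine Finset.sum_congr rfl fun a _ => Finset.sum_congr rfl fun b _ => by rw [key]
    _ = ∑ a, A a (a + q) * (cst p q * Esgn p (a + q)) := by
        refine Finset.sum_congr rfl fun a _ => ?_
        rw [Finset.sum_eq_single (a + q)]
        · simp
        · intro b _ hb; simp [hb]
        · intro h; exact absurd (Finset.mem_univ _) h
    _ = cst p q * Esgn p q * ∑ a, A a (a + q) * Esgn p a := by
        rw [Finset.mul_sum]
        refine Finset.sum_congr rfl fun a _ => ?_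
        rw [Esgn_add]; ring
end CF

section CF2
variable {n : ℕ}

lemma Esgn_zero (p : Fin n → ZMod 2) : Esgn p 0 = 1 := by
  rw [Esgn]
  refine Finset.prod_eq_one fun k _ => ?_
  show ((-1:ℂ)) ^ ((p k).val * (0 : ZMod 2).val) = 1
  rw [zmod2_val_zero, Nat.mul_zero, pow_zero]

lemma Esgn_sum (p : Fin n → ZMod 2) {ι : Type*} (s : Finset ι) (f : ι → Fin n → ZMod 2) :
    Esgn p (∑ i ∈ s, f i) = ∏ i ∈ s, Esgn p (f i) := by
  induction s using Finset.cons_induction with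
  | empty => simp [Esgn_zero]
  | cons a s ha ih => rw [Finset.sum_cons, Finset.prod_cons, Esgn_add, ih]

lemma conj_Esgn (p a : Fin n → ZMod 2) : (starRingEnd ℂ) (Esgn p a) = Esgn p a := by
  rcases Esgn_cases p a with h | h <;> rw [h] <;> simp

lemma sum_pi_prod {ι : Type*} [Fintype ι] [DecidableEq ι] {κ : Type*} [Fintype κ]
    (f : ι → κ → ℂ) :
    ∑ a : ι → κ, ∏ k, f k (a k) = ∏ k, ∑ t, f k t := by
  rw [Finset.prod_univ_sum, Fintype.piFinset_univ]

lemma orthE (p p' : Fin n → ZMod 2) :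
    ∑ a : Fin n → ZMod 2, Esgn p a * Esgn p' a = if p = p' then (2:ℂ)^n else 0 := by
  have : ∀ a : Fin n → ZMod 2, Esgn p a * Esgn p' a =
      ∏ k, ((-1:ℂ) ^ ((p k).val * (a k).val) * (-1) ^ ((p' k).val * (a k).val)) := by
    intro a; rw [Esgn, Esgn, ← Finset.prod_mul_distrib]
  rw [Finset.sum_congr rfl fun a _ => this a]
  refine Eq.trans (sum_pi_prod fun k (t : ZMod 2) =>
    (-1:ℂ) ^ ((p k).val * t.val) * (-1) ^ ((p' k).val * t.val)) ?_
  have hfac : ∀ k : Fin n, (∑ t : ZMod 2, (-1:ℂ) ^ ((p k).val * t.val) * (-1) ^ ((p' k).val * t.val))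
      = if p k = p' k then 2 else 0 := by
    intro k
    rw [sum_zmod2]
    rcases zmod2_cases (p k) with h | h <;> rcases zmod2_cases (p' k) with h' | h' <;>
      rw [h, h'] <;> norm_num [zmod2_val_zero, zmod2_val_one]
  rw [Finset.prod_congr rfl fun k _ => hfac k]
  by_cases h : p = p'
  · subst h; simp
  · obtain ⟨k, hk⟩ : ∃ k, p k ≠ p' k := by
      by_contra hc; push_neg at hc; exact h (funext hc)
    rw [if_neg h]
    exact Finset.prod_eq_zero (Finset.mem_univ k) (if_neg hk)

lemma cst_sq_Esgn (p q : Fin n → ZMod 2) : cst p q * cst p q * Esgn p q = 1 := by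
  rw [cst, Esgn, ← Finset.prod_mul_distrib, ← Finset.prod_mul_distrib]
  refine Finset.prod_eq_one fun k _ => ?_
  rcases zmod2_cases (p k) with h | h <;> rcases zmod2_cases (q k) with h' | h' <;>
    rw [h, h'] <;>
    norm_num [zmod2_val_zero, zmod2_val_one, Complex.inv_I]

lemma conj_cst (p q : Fin n → ZMod 2) :
    (starRingEnd ℂ) (cst p q) = cst p q * Esgn p q := by
  rw [cst, Esgn, map_prod, ← Finset.prod_mul_distrib]
  refine Finset.prod_congr rfl fun k _ => ?_
  rcases zmod2_cases (p k) with h | h <;> rcases zmod2_cases (q k) with h' | h' <;>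
    rw [h, h'] <;>
    norm_num [zmod2_val_zero, zmod2_val_one, Complex.inv_I]

/-- reindexing sum for transpose-type identities -/
lemma sum_shift (A : Matrix (Fin n → ZMod 2) (Fin n → ZMod 2) ℂ) (p q : Fin n → ZMod 2) :
    ∑ a, A (a + q) a * Esgn p a = Esgn p q * ∑ a, A a (a + q) * Esgn p a := by
  rw [Finset.mul_sum]
  refine Fintype.sum_equiv (Equiv.addRight q) _ _ fun b => ?_
  show A (b + q) b * Esgn p b = Esgn p q * (A (b + q) (b + q + q) * Esgn p (b + q))
  have hq : b + q + q = b := by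
    rw [add_assoc, add_self_zmod2, add_zero]
  rw [hq, Esgn_add]
  have := Esgn_sq p q
  calc A (b + q) b * Esgn p b
      = (Esgn p q * Esgn p q) * (A (b + q) b * Esgn p b) := by rw [this, one_mul]
    _ = Esgn p q * (A (b + q) b * (Esgn p b * Esgn p q)) := by ring

lemma add_self_zmod2' (x : ZMod 2) : x + x = 0 := by revert x; decide

lemma prod_ite_eq_pi' (b c : Fin n → ZMod 2) :
    (∏ k, if b k = c k then (1:ℂ) else 0) = if b = c then 1 else 0 := prod_ite_eq_pi b c

lemma charFn_sub (A B : Matrix (Fin n → ZMod 2) (Fin n → ZMod 2) ℂ)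
    (pq : (Fin n → ZMod 2) × (Fin n → ZMod 2)) :
    charFn (A - B) pq = charFn A pq - charFn B pq := by
  rw [charFn, charFn, charFn, Matrix.sub_mul, Matrix.trace_sub]

lemma charFn_smul (c : ℂ) (A : Matrix (Fin n → ZMod 2) (Fin n → ZMod 2) ℂ)
    (pq : (Fin n → ZMod 2) × (Fin n → ZMod 2)) :
    charFn (c • A) pq = c * charFn A pq := by
  rw [charFn, charFn, Matrix.smul_mul, Matrix.trace_smul, smul_eq_mul]

lemma charFn_sum {ι : Type*} (s : Finset ι)
    (A : ι → Matrix (Fin n → ZMod 2) (Fin n → ZMod 2) ℂ)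
    (pq : (Fin n → ZMod 2) × (Fin n → ZMod 2)) :
    charFn (∑ i ∈ s, A i) pq = ∑ i ∈ s, charFn (A i) pq := by
  rw [charFn, Matrix.sum_mul, Matrix.trace_sum]
  rfl

lemma charFn_pauliWn (pq' pq : (Fin n → ZMod 2) × (Fin n → ZMod 2)) :
    charFn (pauliWn n pq') pq = if pq = pq' then (2:ℂ)^n else 0 := by
  obtain ⟨p, q⟩ := pq
  obtain ⟨p', q'⟩ := pq'
  rw [charFn_eq]
  have hiff : ∀ x y z : ZMod 2, (x = x + y + z) ↔ (z = y) := by decide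
  have hW : ∀ a : Fin n → ZMod 2, pauliWn n (p', q') a (a + q) =
      cst p' q' * Esgn p' a * (if q' = q then 1 else 0) := by
    intro a
    rw [pauliWn]
    show (∏ k, pauliW (p' k) (q' k) (a k) (a k + q k)) = _
    have hk : ∀ k, pauliW (p' k) (q' k) (a k) ((a k) + q k) =
        Complex.I ^ (-(((p' k).val * (q' k).val) : ℤ)) * ((-1 : ℂ) ^ ((p' k).val * (a k).val))
          * (if q' k = q k then 1 else 0) := by
      intro k
      rw [pauliW_apply]
      congr 1
      exact if_congr (hiff (a k) (q k) (q' k)) rfl rfl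
    rw [Finset.prod_congr rfl fun k _ => hk k, Finset.prod_mul_distrib,
      Finset.prod_mul_distrib, prod_ite_eq_pi' q' q]
    rfl
  rw [Finset.sum_congr rfl fun a _ => by rw [hW a]]
  by_cases hq : q' = q
  · rw [if_pos hq]
    simp only [mul_one]
    have hsum : (∑ a, cst p' q' * Esgn p' a * Esgn p a)
        = cst p' q' * ∑ a, Esgn p a * Esgn p' a := by
      rw [Finset.mul_sum]; exact Finset.sum_congr rfl fun a _ => by ring
    rw [hsum, orthE]
    by_cases hp : p = p'
    · rw [if_pos hp, if_pos (Prod.ext hp hq.symm)]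
      have hc : cst p' q' = cst p q := by rw [hp, hq]
      rw [hc]
      have h1 := cst_sq_Esgn p q
      calc cst p q * Esgn p q * (cst p q * (2:ℂ)^n)
          = (cst p q * cst p q * Esgn p q) * (2:ℂ)^n := by ring
        _ = (2:ℂ)^n := by rw [h1, one_mul]
    · rw [if_neg hp, if_neg (fun h => hp (congrArg Prod.fst h))]
      simp
  · rw [if_neg (fun h => hq (congrArg Prod.snd h).symm)]
    simp [hq]

lemma charFn_transpose (A : Matrix (Fin n → ZMod 2) (Fin n → ZMod 2) ℂ)
    (p q : Fin n → ZMod 2) :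
    charFn Aᵀ (p, q) = Esgn p q * charFn A (p, q) := by
  rw [charFn_eq, charFn_eq]
  have : (∑ a, Aᵀ a (a + q) * Esgn p a) = ∑ a, A (a + q) a * Esgn p a := rfl
  rw [this, sum_shift]
  ring

lemma charFn_real (ρ : Matrix (Fin n → ZMod 2) (Fin n → ZMod 2) ℂ)
    (hH : ρ.IsHermitian) (p q : Fin n → ZMod 2) :
    (starRingEnd ℂ) (charFn ρ (p, q)) = charFn ρ (p, q) := by
  rw [charFn_eq, _root_.map_mul, _root_.map_mul, conj_cst, conj_Esgn, map_sum]
  have h1 : ∀ a, (starRingEnd ℂ) (ρ a (a + q) * Esgn p a) = ρ (a + q) a * Esgn p a := by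
    intro a
    rw [_root_.map_mul, conj_Esgn]
    congr 1
    have := hH.apply (a + q) a
    rw [← this]
    rfl
  rw [Finset.sum_congr rfl fun a _ => h1 a, sum_shift]
  have h2 := Esgn_sq p q
  calc cst p q * Esgn p q * Esgn p q * (Esgn p q * ∑ a, ρ a (a + q) * Esgn p a)
      = (Esgn p q * Esgn p q) * ((Esgn p q * cst p q) * ∑ a, ρ a (a + q) * Esgn p a) := by ring
    _ = cst p q * Esgn p q * ∑ a, ρ a (a + q) * Esgn p a := by rw [h2]; ring

open scoped Classical in
lemma charFn_meanState (ρ : Matrix (Fin n → ZMod 2) (Fin n → ZMod 2) ℂ)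
    (pq : (Fin n → ZMod 2) × (Fin n → ZMod 2)) :
    charFn (meanState ρ) pq
      = if ‖charFn ρ pq‖ = 1 then charFn ρ pq else 0 := by
  rw [meanState, charFn_smul, charFn_sum]
  have h1 : ∀ pq' : (Fin n → ZMod 2) × (Fin n → ZMod 2),
      charFn ((if ‖charFn ρ pq'‖ = 1 then charFn ρ pq' else 0) • pauliWn n pq') pq
      = (if ‖charFn ρ pq'‖ = 1 then charFn ρ pq' else 0)
          * (if pq = pq' then (2:ℂ)^n else 0) := by
    intro pq'
    rw [charFn_smul, charFn_pauliWn]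
  rw [Finset.sum_congr rfl fun pq' _ => h1 pq']
  have h2 : (∑ pq' : (Fin n → ZMod 2) × (Fin n → ZMod 2),
      (if ‖charFn ρ pq'‖ = 1 then charFn ρ pq' else 0)
        * (if pq = pq' then (2:ℂ)^n else 0))
      = ∑ pq' : (Fin n → ZMod 2) × (Fin n → ZMod 2),
        (if pq = pq' then (if ‖charFn ρ pq'‖ = 1 then charFn ρ pq' else 0) * (2:ℂ)^n
          else 0) := by
    refine Finset.sum_congr rfl fun pq' _ => ?_
    by_cases h : pq = pq' <;> simp [h]
  rw [h2, Finset.sum_ite_eq, if_pos (Finset.mem_univ _)]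
  have : ((2:ℂ)^n)⁻¹ * (2:ℂ)^n = 1 := by
    exact inv_mul_cancel₀ (pow_ne_zero _ two_ne_zero)
  rw [mul_comm ((if ‖charFn ρ pq‖ = 1 then charFn ρ pq else 0)) ((2:ℂ)^n),
    ← mul_assoc, this, one_mul]

end CF2

section KEY
variable {G : Type*} [AddCommGroup G] [Fintype G] [DecidableEq G]

def keyInv (m : ℕ) (t : Fin (m + 1) → G) : Fin (m + 1) → G :=
  fun i => if i = 0 then ∑ j, t j else t i + ∑ j, t j

variable (h2 : ∀ x : G, x + x = 0)
include h2

lemma even_smul_zero (N : ℕ) (c : G) : (2 * N) • c = 0 := by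
  rw [mul_comm, ← smul_smul, two_smul, h2, smul_zero]

lemma keyFun_sum (N : ℕ) (t : Fin (2 * N + 1) → G) :
    ∑ j, keyFun (2 * N) t j = t 0 := by
  rw [Fin.sum_univ_succ]
  have h0 : keyFun (2 * N) t 0 = ∑ j, t j := if_pos rfl
  have hs : ∀ j : Fin (2 * N), keyFun (2 * N) t j.succ = t j.succ + t 0 :=
    fun j => if_neg (Fin.succ_ne_zero j)
  rw [h0, Finset.sum_congr rfl fun j _ => hs j, Finset.sum_add_distrib,
    Finset.sum_const, Finset.card_univ, Fintype.card_fin, even_smul_zero h2, add_zero,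
    Fin.sum_univ_succ t, add_assoc, add_comm (t 0), add_assoc, ← add_assoc]
  rw [h2, zero_add]

lemma keyInv_sum (N : ℕ) (s : Fin (2 * N + 1) → G) :
    ∑ j, keyInv (2 * N) s j = s 0 := by
  rw [Fin.sum_univ_succ]
  have h0 : keyInv (2 * N) s 0 = ∑ j, s j := if_pos rfl
  have hs : ∀ j : Fin (2 * N), keyInv (2 * N) s j.succ = s j.succ + ∑ j', s j' :=
    fun j => if_neg (Fin.succ_ne_zero j)
  rw [h0, Finset.sum_congr rfl fun j _ => hs j, Finset.sum_add_distrib,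
    Finset.sum_const, Finset.card_univ, Fintype.card_fin, even_smul_zero h2, add_zero,
    Fin.sum_univ_succ s, add_assoc, add_comm (s 0), add_assoc, ← add_assoc]
  rw [h2, zero_add]

lemma keyInv_keyFun (N : ℕ) (t : Fin (2 * N + 1) → G) :
    keyInv (2 * N) (keyFun (2 * N) t) = t := by
  funext i
  by_cases hi : i = 0
  · subst hi
    show (if (0 : Fin (2*N+1)) = 0 then ∑ j, keyFun (2 * N) t j else _) = t 0
    rw [if_pos rfl, keyFun_sum h2]
  · show (if i = 0 then _ else keyFun (2 * N) t i + ∑ j, keyFun (2 * N) t j) = t i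
    rw [if_neg hi, keyFun_sum h2]
    show (if i = 0 then ∑ j, t j else t i + t 0) + t 0 = t i
    rw [if_neg hi, add_assoc, h2, add_zero]

lemma keyFun_keyInv (N : ℕ) (s : Fin (2 * N + 1) → G) :
    keyFun (2 * N) (keyInv (2 * N) s) = s := by
  funext i
  by_cases hi : i = 0
  · subst hi
    show (if (0 : Fin (2*N+1)) = 0 then ∑ j, keyInv (2 * N) s j else _) = s 0
    rw [if_pos rfl, keyInv_sum h2]
  · show (if i = 0 then _ else keyInv (2 * N) s i + keyInv (2 * N) s 0) = s i
    rw [if_neg hi]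
    show (if i = 0 then _ else s i + ∑ j, s j) + (if (0:Fin (2*N+1)) = 0 then ∑ j, s j else _) = s i
    rw [if_neg hi, if_pos rfl, add_assoc, h2, add_zero]

lemma keyU_apply (N : ℕ) (x z : Fin (2 * N + 1) → G) :
    keyU (2 * N) x z = if z = keyInv (2 * N) x then (1 : ℂ) else 0 := by
  show (if x = keyFun (2 * N) z then (1:ℂ) else 0) = _
  refine if_congr ⟨fun h => by rw [h, keyInv_keyFun h2], fun h => by rw [h, keyFun_keyInv h2]⟩ rfl rfl

lemma keyConj (N : ℕ) (M : Matrix (Fin (2 * N + 1) → G) (Fin (2 * N + 1) → G) ℂ)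
    (x y : Fin (2 * N + 1) → G) :
    (keyU (2 * N) * M * (keyU (2 * N))ᴴ : Matrix (Fin (2 * N + 1) → G) (Fin (2 * N + 1) → G) ℂ)
      x y = M (keyInv (2 * N) x) (keyInv (2 * N) y) := by
  have hstar : ∀ (c : Prop) [Decidable c], star (if c then (1:ℂ) else 0) = if c then 1 else 0 := by
    intro c _; split <;> simp
  simp only [Matrix.mul_apply, Matrix.conjTranspose_apply, keyU_apply h2, hstar,
    ite_mul, one_mul, zero_mul, mul_ite, mul_one, mul_zero]
  rw [Finset.sum_ite_eq' Finset.univ (keyInv (2 * N) y), if_pos (Finset.mem_univ _),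
    Finset.sum_ite_eq' Finset.univ (keyInv (2 * N) x), if_pos (Finset.mem_univ _)]

end KEY

section CONV
variable {n : ℕ}

lemma scalar_key (N : ℕ) (p q : Fin n → ZMod 2) :
    cst p q * Esgn p q = Esgn p q ^ N * (cst p q ^ (2*N+1) * Esgn p q ^ (2*N+1)) := by
  rw [cst, Esgn, ← Finset.prod_pow, ← Finset.prod_pow, ← Finset.prod_pow,
    ← Finset.prod_mul_distrib, ← Finset.prod_mul_distrib, ← Finset.prod_mul_distrib]
  refine Finset.prod_congr rfl fun k _ => ?_
  have e1 : ((-Complex.I):ℂ)^(2*N+1) = (-1:ℂ)^N * (-Complex.I) := by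
    rw [pow_succ, pow_mul, show ((-Complex.I))^2 = (-1:ℂ) by
      rw [neg_pow, Complex.I_sq]; ring]
  have e2 : ((-1:ℂ))^(2*N+1) = -1 := by rw [pow_succ, pow_mul]; norm_num
  have e3 : ((-1:ℂ))^N * (-1)^N = 1 := by rw [← pow_add, ← two_mul, pow_mul]; norm_num
  rcases zmod2_cases (p k) with h | h <;> rcases zmod2_cases (q k) with h' | h' <;>
    rw [h, h']
  · norm_num [zmod2_val_zero]
  · norm_num [zmod2_val_zero, zmod2_val_one]
  · norm_num [zmod2_val_zero, zmod2_val_one]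
  · simp only [zmod2_val_one, Nat.mul_one, Nat.cast_one, mul_one, pow_one]
    rw [_root_.zpow_neg, zpow_one, Complex.inv_I, e1, e2]
    linear_combination -Complex.I * e3

set_option maxHeartbeats 1000000 in
lemma charFn_qconv (N : ℕ) (ρ : Matrix (Fin n → ZMod 2) (Fin n → ZMod 2) ℂ)
    (p q : Fin n → ZMod 2) :
    charFn (qconv (2 * N) (fun _ => ρ)) (p, q)
      = Esgn p q ^ N * charFn ρ (p, q) ^ (2 * N + 1) := by
  have h2 : ∀ x : Fin n → ZMod 2, x + x = 0 := add_self_zmod2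
  rw [charFn_eq, charFn_eq]
  set X : (Fin n → ZMod 2) → ({i : Fin (2*N+1) // i ≠ 0} → (Fin n → ZMod 2)) →
      (Fin (2*N+1) → Fin n → ZMod 2) :=
    fun a r i => if h : i = 0 then a else r ⟨i, h⟩ with hX
  have hX0 : ∀ a r, X a r 0 = a := fun a r => dif_pos rfl
  have hXs : ∀ a r (i : Fin (2*N+1)) (hi : i ≠ 0), X a r i = r ⟨i, hi⟩ :=
    fun a r i hi => dif_neg hi
  have hptr : ∀ a b, qconv (2*N) (fun _ => ρ) a b =
      ∑ r, bigTensor (2*N) (fun _ => ρ) (keyInv (2*N) (X a r)) (keyInv (2*N) (X b r)) := by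
    intro a b
    have hq : qconv (2*N) (fun _ => ρ) a b =
        ∑ r : {i : Fin (2*N+1) // i ≠ 0} → (Fin n → ZMod 2),
          (keyU (2*N) * bigTensor (2*N) (fun _ => ρ) * (keyU (2*N))ᴴ :
            Matrix (Fin (2*N+1) → Fin n → ZMod 2) (Fin (2*N+1) → Fin n → ZMod 2) ℂ)
            (X a r) (X b r) := rfl
    rw [hq]
    exact Finset.sum_congr rfl fun r _ => keyConj h2 N _ _ _
  have hXsum : ∀ a r, ∑ j, X a r j = a + ∑ j : Fin (2*N), r ⟨j.succ, Fin.succ_ne_zero j⟩ := by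
    intro a r
    rw [Fin.sum_univ_succ, hX0]
    exact congrArg (a + ·)
      (Finset.sum_congr rfl fun j _ => hXs a r j.succ (Fin.succ_ne_zero j))
  have hshift : ∀ a r, keyInv (2*N) (X (a + q) r) = fun i => keyInv (2*N) (X a r) i + q := by
    intro a r
    have hs : ∑ j, X (a+q) r j = (∑ j, X a r j) + q := by
      rw [hXsum, hXsum]; abel
    funext i
    by_cases hi : i = 0
    · subst hi
      show (if (0 : Fin (2*N+1)) = 0 then ∑ j, X (a+q) r j else _)
        = (if (0 : Fin (2*N+1)) = 0 then ∑ j, X a r j else _) + q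
      rw [if_pos rfl, if_pos rfl]
      exact hs
    · show (if i = 0 then _ else X (a+q) r i + ∑ j, X (a+q) r j)
        = (if i = 0 then _ else X a r i + ∑ j, X a r j) + q
      rw [if_neg hi, if_neg hi, hXs _ _ _ hi, hXs _ _ _ hi, hs, add_assoc]
  -- the bijection
  set ψ : (Fin n → ZMod 2) × ({i : Fin (2*N+1) // i ≠ 0} → (Fin n → ZMod 2)) →
      (Fin (2*N+1) → Fin n → ZMod 2) := fun ar => keyInv (2*N) (X ar.1 ar.2) with hψdef
  have hψX : ∀ u, X (keyFun (2*N) u 0) (fun i => keyFun (2*N) u i.1) = keyFun (2*N) u := by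
    intro u
    funext i
    by_cases hi : i = 0
    · subst hi; exact hX0 (keyFun (2*N) u 0) (fun i => keyFun (2*N) u i.1)
    · exact hXs (keyFun (2*N) u 0) (fun i => keyFun (2*N) u i.1) i hi
  have hψ : Function.Bijective ψ := by
    rw [Function.bijective_iff_has_inverse]
    refine ⟨fun u => (keyFun (2*N) u 0, fun i => keyFun (2*N) u i.1), fun ar => ?_, fun u => ?_⟩
    · obtain ⟨a, r⟩ := ar
      have h1 : keyFun (2*N) (ψ (a, r)) = X a r := keyFun_keyInv h2 N _
      refine Prod.ext ?_ ?_
      · show keyFun (2*N) (ψ (a, r)) 0 = a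
        rw [h1, hX0]
      · show (fun i : {i : Fin (2*N+1) // i ≠ 0} => keyFun (2*N) (ψ (a, r)) i.1) = r
        funext i
        have h3 : keyFun (2*N) (ψ (a, r)) i.1 = X a r i.1 := by rw [h1]
        rw [h3]
        exact hXs a r i.1 i.2
    · show keyInv (2*N) (X (keyFun (2*N) u 0) (fun i => keyFun (2*N) u i.1)) = u
      rw [hψX, keyInv_keyFun h2]
  have hmain : (∑ a, qconv (2*N) (fun _ => ρ) a (a + q) * Esgn p a)
      = (∑ t, ρ t (t + q) * Esgn p t) ^ (2*N+1) := by
    calc (∑ a, qconv (2*N) (fun _ => ρ) a (a + q) * Esgn p a)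
        = ∑ a, ∑ r, bigTensor (2*N) (fun _ => ρ) (ψ (a, r))
            (fun i => ψ (a, r) i + q) * Esgn p a := by
          refine Finset.sum_congr rfl fun a _ => ?_
          rw [hptr, Finset.sum_mul]
          refine Finset.sum_congr rfl fun r _ => ?_
          rw [hshift]
      _ = ∑ ar : (Fin n → ZMod 2) × ({i : Fin (2*N+1) // i ≠ 0} → (Fin n → ZMod 2)),
            bigTensor (2*N) (fun _ => ρ) (ψ ar) (fun i => ψ ar i + q) * Esgn p ar.1 :=
          (Fintype.sum_prod_type (fun ar : (Fin n → ZMod 2) ×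
            ({i : Fin (2*N+1) // i ≠ 0} → (Fin n → ZMod 2)) =>
            bigTensor (2*N) (fun _ => ρ) (ψ ar) (fun i => ψ ar i + q) * Esgn p ar.1)).symm
      _ = ∑ u : Fin (2*N+1) → Fin n → ZMod 2,
            bigTensor (2*N) (fun _ => ρ) u (fun i => u i + q) * Esgn p (keyFun (2*N) u 0) := by
          refine Fintype.sum_bijective ψ hψ _ _ fun ar => ?_
          obtain ⟨a, r⟩ := ar
          have : keyFun (2*N) (ψ (a, r)) 0 = a := by
            rw [hψdef]
            show keyFun (2*N) (keyInv (2*N) (X a r)) 0 = a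
            rw [keyFun_keyInv h2, hX0]
          rw [this]
      _ = ∑ u : Fin (2*N+1) → Fin n → ZMod 2, ∏ i, (ρ (u i) (u i + q) * Esgn p (u i)) := by
          refine Finset.sum_congr rfl fun u _ => ?_
          have hb : bigTensor (2*N) (fun _ => ρ) u (fun i => u i + q)
              = ∏ i, ρ (u i) (u i + q) := rfl
          have hk : keyFun (2*N) u 0 = ∑ j, u j := if_pos rfl
          rw [hb, hk, Esgn_sum, ← Finset.prod_mul_distrib]
      _ = ∏ i : Fin (2*N+1), ∑ t, ρ t (t + q) * Esgn p t :=
          sum_pi_prod (fun (i : Fin (2*N+1)) (t : Fin n → ZMod 2) => ρ t (t + q) * Esgn p t)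
      _ = (∑ t, ρ t (t + q) * Esgn p t) ^ (2*N+1) := by
          rw [Finset.prod_const, Finset.card_univ, Fintype.card_fin]
  rw [hmain, mul_pow, mul_pow, scalar_key N p q]
  ring
end CONV

section FINAL
variable {n : ℕ}

lemma abs_le_one_sub_magicGap (ρ : Matrix (Fin n → ZMod 2) (Fin n → ZMod 2) ℂ)
    (pq : (Fin n → ZMod 2) × (Fin n → ZMod 2))
    (h0 : charFn ρ pq ≠ 0) (h1 : ‖charFn ρ pq‖ ≠ 1) :
    ‖charFn ρ pq‖ ≤ 1 - magicGap ρ := by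
  have hmem : ‖charFn ρ pq‖ ∈ {r : ℝ | ∃ pq, charFn ρ pq ≠ 0 ∧
      ‖charFn ρ pq‖ ≠ 1 ∧ r = ‖charFn ρ pq‖} :=
    ⟨pq, h0, h1, rfl⟩
  have hne : {r : ℝ | ∃ pq, charFn ρ pq ≠ 0 ∧ ‖charFn ρ pq‖ ≠ 1 ∧
      r = ‖charFn ρ pq‖} ≠ ∅ := Set.Nonempty.ne_empty ⟨_, hmem⟩
  have hfin : ({r : ℝ | ∃ pq, charFn ρ pq ≠ 0 ∧ ‖charFn ρ pq‖ ≠ 1 ∧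
      r = ‖charFn ρ pq‖}).Finite := by
    refine Set.Finite.subset (Set.finite_range
      (fun pq : (Fin n → ZMod 2) × (Fin n → ZMod 2) => ‖charFn ρ pq‖)) ?_
    rintro r ⟨pq', _, _, rfl⟩
    exact ⟨pq', rfl⟩
  rw [magicGap, if_neg hne, sub_sub_cancel]
  exact le_csSup hfin.bddAbove hmem

lemma abs_EsgnN (p q : Fin n → ZMod 2) (N : ℕ) : ‖Esgn p q ^ N‖ = 1 := by
  rcases Esgn_cases p q with h | h <;> rw [h] <;> simp

lemma EsgnN_even (p q : Fin n → ZMod 2) {N : ℕ} (hN : Even N) : Esgn p q ^ N = 1 := by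
  obtain ⟨m, rfl⟩ := hN
  rw [← two_mul, pow_mul, sq, Esgn_sq, one_pow]

lemma EsgnN_odd (p q : Fin n → ZMod 2) {N : ℕ} (hN : ¬ Even N) : Esgn p q ^ N = Esgn p q := by
  obtain ⟨m, rfl⟩ := Nat.not_even_iff_odd.1 hN
  rw [pow_succ, pow_mul, sq, Esgn_sq, one_pow, one_mul]

lemma pointwise_bound (N : ℕ) (ρ : Matrix (Fin n → ZMod 2) (Fin n → ZMod 2) ℂ)
    (hρ : IsState ρ) (pq : (Fin n → ZMod 2) × (Fin n → ZMod 2)) :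
    ‖charFn (qconv (2 * N) (fun _ => ρ) -
        meanState (if Even N then ρ else ρᵀ)) pq‖
      ≤ (1 - magicGap ρ) ^ (2 * N)
          * ‖charFn (ρ - meanState ρ) pq‖ := by
  obtain ⟨p, q⟩ := pq
  set Ξ := charFn ρ (p, q) with hΞ
  have hK : (0:ℝ) ≤ (1 - magicGap ρ) ^ (2 * N) := Even.pow_nonneg (even_two_mul N) _
  have hσ : charFn (if Even N then ρ else ρᵀ) (p, q) = Esgn p q ^ N * Ξ := by
    by_cases hN : Even N
    · rw [if_pos hN, EsgnN_even p q hN, one_mul]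
    · rw [if_neg hN, EsgnN_odd p q hN, charFn_transpose]
  have habsσ : ‖charFn (if Even N then ρ else ρᵀ) (p, q)‖ = ‖Ξ‖ := by
    rw [hσ, norm_mul, abs_EsgnN, one_mul]
  have hD : charFn (qconv (2 * N) (fun _ => ρ) - meanState (if Even N then ρ else ρᵀ)) (p, q)
      = Esgn p q ^ N * (Ξ ^ (2*N+1) - (if ‖Ξ‖ = 1 then Ξ else 0)) := by
    rw [charFn_sub, charFn_qconv, charFn_meanState, habsσ, hσ]
    split_ifs <;> ring
  have habsD : ‖charFn (qconv (2 * N) (fun _ => ρ) -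
      meanState (if Even N then ρ else ρᵀ)) (p, q)‖
      = ‖Ξ ^ (2*N+1) - (if ‖Ξ‖ = 1 then Ξ else 0)‖ := by
    rw [hD, norm_mul, abs_EsgnN, one_mul]
  have hC : charFn (ρ - meanState ρ) (p, q) = Ξ - (if ‖Ξ‖ = 1 then Ξ else 0) := by
    rw [charFn_sub, charFn_meanState]
  rw [habsD, hC]
  by_cases hab : ‖Ξ‖ = 1
  · -- |Ξ| = 1 : Ξ = ±1, term vanishes
    have hconj : (starRingEnd ℂ) Ξ = Ξ := charFn_real ρ hρ.1.1 p q
    have hre : Ξ = (Ξ.re : ℂ) := (Complex.conj_eq_iff_re.1 hconj).symm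
    have habs' : |Ξ.re| = 1 := by
      rw [hre, Complex.norm_real, Real.norm_eq_abs] at hab; exact hab
    have hval : Ξ = 1 ∨ Ξ = -1 := by
      rcases (abs_eq (by norm_num : (0:ℝ) ≤ 1)).1 habs' with h | h
      · left; rw [hre, h]; norm_num
      · right; rw [hre, h]; norm_num
    have hpow : Ξ ^ (2*N+1) = Ξ := by
      rcases hval with h | h <;> rw [h]
      · rw [one_pow]
      · rw [pow_succ, pow_mul]; norm_num
    rw [if_pos hab, hpow, sub_self]
    simp
  · rw [if_neg hab, sub_zero, sub_zero]
    by_cases h0 : Ξ = 0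
    · rw [h0, zero_pow (Nat.succ_ne_zero _)]
      simp
    · have hle : ‖Ξ‖ ≤ 1 - magicGap ρ := abs_le_one_sub_magicGap ρ (p, q) h0 hab
      rw [norm_pow]
      calc ‖Ξ‖ ^ (2*N+1)
          = ‖Ξ‖ ^ (2*N) * ‖Ξ‖ := by rw [pow_succ]
        _ ≤ (1 - magicGap ρ) ^ (2*N) * ‖Ξ‖ := by
            refine mul_le_mul_of_nonneg_right ?_ (norm_nonneg _)
            exact pow_le_pow_left₀ (norm_nonneg _) hle _


/-- **Quantum central limit theorem for qubit convolution:** for an `n`-qubit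
state `ρ` and `K = 2N+1`,
`‖⊠_K ρ − M(ρ^#)‖₂ ≤ (1 − MG(ρ))^{K-1} ‖ρ − M(ρ)‖₂`,
with `ρ^# = ρ` for even `N` and `ρ^# = ρᵀ` for odd `N`. -/
theorem qubit_central_limit (n N : ℕ)
    (ρ : Matrix (Fin n → ZMod 2) (Fin n → ZMod 2) ℂ) (hρ : IsState ρ) :
    hsNorm2 (qconv (2 * N) (fun _ => ρ) -
        meanState (if Even N then ρ else ρᵀ)) ≤
      (1 - magicGap ρ) ^ (2 * N) * hsNorm2 (ρ - meanState ρ) := by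

  have hK : (0:ℝ) ≤ (1 - magicGap ρ) ^ (2 * N) := Even.pow_nonneg (even_two_mul N) _
  have hc : (0:ℝ) ≤ ((2:ℝ)^n)⁻¹ := by positivity
  rw [hsNorm2, hsNorm2]
  have h1 : ((2:ℝ)^n)⁻¹ * ∑ pq, (‖charFn (qconv (2 * N) (fun _ => ρ) -
      meanState (if Even N then ρ else ρᵀ)) pq‖) ^ 2
      ≤ ((1 - magicGap ρ) ^ (2 * N)) ^ 2 * (((2:ℝ)^n)⁻¹ *
        ∑ pq, (‖charFn (ρ - meanState ρ) pq‖) ^ 2) := by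
    rw [← mul_assoc, mul_comm (((1 - magicGap ρ) ^ (2 * N)) ^ 2), mul_assoc]
    refine mul_le_mul_of_nonneg_left ?_ hc
    rw [Finset.mul_sum]
    refine Finset.sum_le_sum fun pq _ => ?_
    have := pointwise_bound N ρ hρ pq
    calc (‖charFn (qconv (2 * N) (fun _ => ρ) -
            meanState (if Even N then ρ else ρᵀ)) pq‖) ^ 2
        ≤ ((1 - magicGap ρ) ^ (2 * N) * ‖charFn (ρ - meanState ρ) pq‖) ^ 2 :=
          pow_le_pow_left₀ (norm_nonneg _) this 2
      _ = ((1 - magicGap ρ) ^ (2 * N)) ^ 2 * (‖charFn (ρ - meanState ρ) pq‖) ^ 2 := by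
          ring
  calc Real.sqrt (((2:ℝ)^n)⁻¹ * ∑ pq, (‖charFn (qconv (2 * N) (fun _ => ρ) -
          meanState (if Even N then ρ else ρᵀ)) pq‖) ^ 2)
      ≤ Real.sqrt (((1 - magicGap ρ) ^ (2 * N)) ^ 2 * (((2:ℝ)^n)⁻¹ *
          ∑ pq, (‖charFn (ρ - meanState ρ) pq‖) ^ 2)) := Real.sqrt_le_sqrt h1
    _ = (1 - magicGap ρ) ^ (2 * N) * Real.sqrt (((2:ℝ)^n)⁻¹ *
          ∑ pq, (‖charFn (ρ - meanState ρ) pq‖) ^ 2) := by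
        rw [Real.sqrt_mul (sq_nonneg _), Real.sqrt_sq hK]
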